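/- Let O be a partial orientation of the n-cube all of whose unoriented half-edges form a pairwise vertex-disjoint collection F of faces, each of which is a hypervertex, and suppose O is partially Szabó–Welzl. If each face f ∈ F is independently oriented according to an arbitrary USO of the same dimension as f, the resulting full orientation is a USO of the n-cube. -/
import Mathlib


def memFace {n : ℕ} (f : Fin n → Option Bool) (v : Fin n → Bool) : Prop :=
  ∀ i, ∀ b, f i = some b → v i = b

/-- Sink of a face with respect to a sign-valued orientation (`-1` = incoming). -/
def isSinkOf {n : ℕ} (O : (Fin n → Bool) → Fin n → SignType)
    (f : Fin n → Option Bool) (v : Fin n → Bool) : Prop :=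
  memFace f v ∧ ∀ i, f i = none → O v i = -1

def IsUSO {n : ℕ} (O : (Fin n → Bool) → Fin n → SignType) : Prop :=
  ∀ f : Fin n → Option Bool, ∃! v, isSinkOf O f v

def PartialSW {n : ℕ} (O : (Fin n → Bool) → Fin n → SignType) : Prop :=
  ∀ v w : Fin n → Bool, v ≠ w →
    (∀ i, v i ≠ w i → O v i = 0 ∧ O w i = 0) ∨
    (∃ i, v i ≠ w i ∧ ((O v i = 1 ∧ O w i = -1) ∨ (O v i = -1 ∧ O w i = 1)))

namespace SW7aux

/-- The smallest face containing both `v` and `w`. -/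
def spanFace {n : ℕ} (v w : Fin n → Bool) : Fin n → Option Bool :=
  fun j => if v j = w j then some (v j) else none

lemma spanFace_none {n : ℕ} {v w : Fin n → Bool} {j : Fin n} :
    spanFace v w j = none ↔ v j ≠ w j := by
  unfold spanFace; split <;> simp_all

lemma spanFace_some {n : ℕ} {v w : Fin n → Bool} {j : Fin n} {b : Bool}
    (h : spanFace v w j = some b) : v j = b ∧ w j = b := by
  unfold spanFace at h
  split at h
  · rename_i hvw
    obtain rfl : v j = b := by injection h
    exact ⟨rfl, hvw.symm⟩
  · cases h

lemma memFace_spanFace_left {n : ℕ} (v w : Fin n → Bool) :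
    memFace (spanFace v w) v := fun j b h => (spanFace_some h).1

lemma memFace_spanFace_right {n : ℕ} (v w : Fin n → Bool) :
    memFace (spanFace v w) w := fun j b h => (spanFace_some h).2

lemma memFace_update_of {n : ℕ} {g : Fin n → Option Bool} {i : Fin n} {c : Bool}
    {v : Fin n → Bool} (hi : g i = none)
    (h : memFace (Function.update g i (some c)) v) : memFace g v := by
  intro j b hj
  apply h j b
  rcases eq_or_ne j i with rfl | hne
  · rw [hi] at hj; cases hj
  · rwa [Function.update_of_ne hne]

lemma filter_update {n : ℕ} (g : Fin n → Option Bool) (i : Fin n) (c : Bool) :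
    (Finset.univ.filter (fun j => Function.update g i (some c) j = none))
      = (Finset.univ.filter (fun j => g j = none)).erase i := by
  ext j
  simp only [Finset.mem_filter, Finset.mem_erase, Finset.mem_univ, true_and]
  rcases eq_or_ne j i with rfl | h
  · simp [Function.update_self]
  · simp [Function.update_of_ne h, h]

lemma signType_eq_one {x : SignType} (h0 : x ≠ 0) (hn : x ≠ -1) : x = 1 := by
  cases x <;> simp_all

lemma signType_conflict {x : SignType} (h1 : x = 1) (h2 : x = -1) : False := by
  rw [h1] at h2; cases h2

end SW7aux

open SW7aux in
/-- Orienting each unoriented hypervertex face of a partially Szabó–Welzl partial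
orientation independently by an arbitrary USO yields a USO of the whole cube. -/
theorem stmt7 {n : ℕ} (O O' : (Fin n → Bool) → Fin n → SignType)
    (F : Set (Fin n → Option Bool))
    (hSW : PartialSW O)
    -- the faces in `F` are pairwise vertex-disjoint
    (hdisj : ∀ f ∈ F, ∀ g ∈ F, f ≠ g → ∀ v, ¬(memFace f v ∧ memFace g v))
    -- the unoriented half-edges of `O` are exactly the half-edges inside faces of `F`
    (hunor : ∀ v i, O v i = 0 ↔ ∃ f ∈ F, memFace f v ∧ f i = none)
    -- each face of `F` is a hypervertex
    (hhyper : ∀ f ∈ F, ∀ i, f i ≠ none →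
      ∀ v w, memFace f v → memFace f w → O v i = O w i)
    -- `O'` is a full orientation agreeing with `O` on oriented half-edges
    (hfull : ∀ v i, O' v i ≠ 0)
    (hagree : ∀ v i, O v i ≠ 0 → O' v i = O v i)
    -- each face `f ∈ F` is oriented in `O'` according to some USO of its dimension:
    -- every subface of `f` has a unique sink with respect to `O'`
    (hinside : ∀ f ∈ F, ∀ g : Fin n → Option Bool,
      (∀ v, memFace g v → memFace f v) → ∃! v, isSinkOf O' g v) :
    IsUSO O' := by
  classical
  -- if all differing coordinates of `v ≠ w` are unoriented, then `v, w` lie in a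
  -- common face of `F` which spans all their differing coordinates
  have pairF : ∀ v w : Fin n → Bool, v ≠ w →
      (∀ i, v i ≠ w i → O v i = 0 ∧ O w i = 0) →
      ∃ f ∈ F, memFace f v ∧ memFace f w ∧ ∀ j, v j ≠ w j → f j = none := by
    intro v w hne h0
    obtain ⟨i, hi⟩ := Function.ne_iff.mp hne
    obtain ⟨f, hfF, hfv, _⟩ := (hunor v i).mp (h0 i hi).1
    have hnone : ∀ j, v j ≠ w j → f j = none := by
      intro j hj
      obtain ⟨f', hf'F, hf'v, hf'j⟩ := (hunor v j).mp (h0 j hj).1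
      by_cases hff : f = f'
      · subst hff; exact hf'j
      · exact absurd ⟨hfv, hf'v⟩ (hdisj f hfF f' hf'F hff v)
    refine ⟨f, hfF, hfv, ?_, hnone⟩
    intro j b hjb
    by_cases hvw : v j = w j
    · rw [← hvw]; exact hfv j b hjb
    · rw [hnone j hvw] at hjb; cases hjb
  -- vertices of the span face of `v, w` lie in such a common face
  have subF : ∀ (v w : Fin n → Bool) (f : Fin n → Option Bool), memFace f v →
      (∀ j, v j ≠ w j → f j = none) →
      ∀ u, memFace (spanFace v w) u → memFace f u := by
    intro v w f hfv hnone u hu j b hjb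
    by_cases hvw : v j = w j
    · have hsp : spanFace v w j = some b := by
        unfold spanFace
        rw [if_pos hvw, hfv j b hjb]
      exact hu j b hsp
    · rw [hnone j hvw] at hjb; cases hjb
  -- any two sinks of a face coincide
  have uniq : ∀ (g : Fin n → Option Bool) (v w : Fin n → Bool),
      isSinkOf O' g v → isSinkOf O' g w → v = w := by
    intro g v w hv hw
    by_contra hne
    have gnone : ∀ j, v j ≠ w j → g j = none := by
      intro j hj
      cases hgj : g j with
      | none => rfl
      | some b => exact absurd ((hv.1 j b hgj).trans (hw.1 j b hgj).symm) hj
    rcases hSW v w hne with h0 | ⟨i, hi, hopp⟩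
    · obtain ⟨f, hfF, hfv, hfw, hnone⟩ := pairF v w hne h0
      obtain ⟨u, _, huniq⟩ := hinside f hfF (spanFace v w) (subF v w f hfv hnone)
      have hvs : isSinkOf O' (spanFace v w) v := by
        refine ⟨memFace_spanFace_left v w, fun j hj => ?_⟩
        exact hv.2 j (gnone j (spanFace_none.mp hj))
      have hws : isSinkOf O' (spanFace v w) w := by
        refine ⟨memFace_spanFace_right v w, fun j hj => ?_⟩
        exact hw.2 j (gnone j (spanFace_none.mp hj))
      exact hne ((huniq v hvs).trans (huniq w hws).symm)
    · have hgi := gnone i hi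
      have hv1 := hv.2 i hgi
      have hw1 := hw.2 i hgi
      rcases hopp with ⟨hva, hwa⟩ | ⟨hva, hwa⟩
      · have : O' v i = 1 := by rw [hagree v i (by rw [hva]; decide), hva]
        exact signType_conflict this hv1
      · have : O' w i = 1 := by rw [hagree w i (by rw [hwa]; decide), hwa]
        exact signType_conflict this hw1
  -- existence of a sink, by induction on the dimension of the face
  have exist : ∀ (k : ℕ) (g : Fin n → Option Bool),
      (Finset.univ.filter (fun j => g j = none)).card ≤ k →
      ∃ v, isSinkOf O' g v := by
    intro k
    induction k with
    | zero =>
      intro g hg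
      have hno : ∀ j, g j ≠ none := by
        intro j hj
        have : j ∈ Finset.univ.filter (fun j => g j = none) := by
          simp [hj]
        have := Finset.card_pos.mpr ⟨j, this⟩
        omega
      refine ⟨fun j => (g j).getD false, ?_, ?_⟩
      · intro j b hj; show (g j).getD false = b; rw [hj]; rfl
      · intro j hj; exact absurd hj (hno j)
    | succ k ih =>
      intro g hg
      by_cases hex : ∃ i, g i = none
      · obtain ⟨i, hi⟩ := hex
        have hmem : i ∈ Finset.univ.filter (fun j => g j = none) := by simp [hi]
        have hcard : ∀ c : Bool,
            (Finset.univ.filter (fun j => Function.update g i (some c) j = none)).card ≤ k := by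
          intro c
          rw [filter_update]
          rw [Finset.card_erase_of_mem hmem]
          have := Finset.card_pos.mpr ⟨i, hmem⟩
          omega
        choose vc hvc using fun c : Bool => ih _ (hcard c)
        have hvci : ∀ c, vc c i = c := by
          intro c
          exact (hvc c).1 i c (by rw [Function.update_self])
        have hgmem : ∀ c, memFace g (vc c) := fun c => memFace_update_of hi (hvc c).1
        by_cases hneg : ∃ c, O' (vc c) i = -1
        · obtain ⟨c, hc⟩ := hneg
          refine ⟨vc c, hgmem c, ?_⟩
          intro j hj
          rcases eq_or_ne j i with rfl | hji
          · exact hc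
          · exact (hvc c).2 j (by rwa [Function.update_of_ne hji])
        · exfalso
          push_neg at hneg
          have hpos : ∀ c, O' (vc c) i = 1 :=
            fun c => signType_eq_one (hfull (vc c) i) (hneg c)
          have hne01 : vc false ≠ vc true := by
            intro h
            have := hvci false
            rw [h, hvci true] at this
            cases this
          have gnone : ∀ j, vc false j ≠ vc true j → g j = none := by
            intro j hj
            cases hgj : g j with
            | none => rfl
            | some b =>
              exact absurd (((hgmem false) j b hgj).trans ((hgmem true) j b hgj).symm) hj
          rcases hSW (vc false) (vc true) hne01 with h0 | ⟨j, hj, hopp⟩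
          · -- both subface sinks lie in a common face of F
            obtain ⟨f, hfF, hf0, hf1, hnone⟩ := pairF (vc false) (vc true) hne01 h0
            have sub' : ∀ u, memFace (spanFace (vc false) (vc true)) u → memFace f u :=
              subF _ _ f hf0 hnone
            obtain ⟨u, hu, _⟩ := hinside f hfF (spanFace (vc false) (vc true)) sub'
            have hg'i : spanFace (vc false) (vc true) i = none :=
              spanFace_none.mpr (by rw [hvci, hvci]; decide)
            have hui : O' u i = -1 := hu.2 i hg'i
            obtain ⟨c, hc⟩ : ∃ c : Bool, u i = c := ⟨u i, rfl⟩
            have sub'' : ∀ u',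
                memFace (Function.update (spanFace (vc false) (vc true)) i (some c)) u' →
                memFace f u' :=
              fun u' h => sub' u' (memFace_update_of hg'i h)
            have claim1 :
                isSinkOf O' (Function.update (spanFace (vc false) (vc true)) i (some c)) u := by
              constructor
              · intro j' b hj'
                rcases eq_or_ne j' i with rfl | hne'
                · rw [Function.update_self] at hj'
                  obtain rfl : c = b := by injection hj'
                  exact hc
                · rw [Function.update_of_ne hne'] at hj'
                  exact hu.1 j' b hj'
              · intro j' hj'
                rcases eq_or_ne j' i with rfl | hne'
                · rw [Function.update_self] at hj'; cases hj'
                · rw [Function.update_of_ne hne'] at hj'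
                  exact hu.2 j' hj'
            have claim2 :
                isSinkOf O' (Function.update (spanFace (vc false) (vc true)) i (some c))
                  (vc c) := by
              constructor
              · intro j' b hj'
                rcases eq_or_ne j' i with rfl | hne'
                · rw [Function.update_self] at hj'
                  obtain rfl : c = b := by injection hj'
                  exact hvci c
                · rw [Function.update_of_ne hne'] at hj'
                  have := spanFace_some hj'
                  cases c
                  · exact this.1
                  · exact this.2
              · intro j' hj'
                rcases eq_or_ne j' i with rfl | hne'
                · rw [Function.update_self] at hj'; cases hj'
                · rw [Function.update_of_ne hne'] at hj'
                  have hgj' : g j' = none := gnone j' (spanFace_none.mp hj')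
                  exact (hvc c).2 j' (by rwa [Function.update_of_ne hne'])
            obtain ⟨u2, _, hu2uniq⟩ :=
              hinside f hfF (Function.update (spanFace (vc false) (vc true)) i (some c)) sub''
            have hueq : u = vc c := (hu2uniq u claim1).trans (hu2uniq (vc c) claim2).symm
            exact signType_conflict (hpos c) (hueq ▸ hui)
          · -- SW pair gives an oriented opposite edge, contradiction
            have hgj : g j = none := gnone j hj
            rcases eq_or_ne j i with rfl | hji
            · rcases hopp with ⟨hva, hwa⟩ | ⟨hva, hwa⟩
              · have : O' (vc true) j = -1 := by
                  rw [hagree _ j (by rw [hwa]; decide), hwa]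
                exact signType_conflict (hpos true) this
              · have : O' (vc false) j = -1 := by
                  rw [hagree _ j (by rw [hva]; decide), hva]
                exact signType_conflict (hpos false) this
            · have hsink : ∀ c : Bool, O' (vc c) j = -1 := by
                intro c
                exact (hvc c).2 j (by rwa [Function.update_of_ne hji])
              rcases hopp with ⟨hva, _⟩ | ⟨_, hwa⟩
              · have : O' (vc false) j = 1 := by
                  rw [hagree _ j (by rw [hva]; decide), hva]
                exact signType_conflict this (hsink false)
              · have : O' (vc true) j = 1 := by
                  rw [hagree _ j (by rw [hwa]; decide), hwa]
                exact signType_conflict this (hsink true)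
      · push_neg at hex
        refine ⟨fun j => (g j).getD false, ?_, ?_⟩
        · intro j b hj; show (g j).getD false = b; rw [hj]; rfl
        · intro j hj; exact absurd hj (hex j)
  intro g
  obtain ⟨v, hv⟩ := exist _ g le_rfl
  exact ⟨v, hv, fun w hw => uniq g w v hw hv⟩
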